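/- For every knowledge model for the initial game H, G_{K*RAT(br^g)} ⊆ T_{sd^l}^∞: common knowledge that each player plays a best response (within H_i, to some joint pure strategy of the opponents he considers possible) implies that the players choose only strategies that survive the (possibly transfinite) iterated elimination of strictly dominated strategies. -/

import Mathlib

/-!
Epistemic analysis of arbitrary strategic games. The initial game `H` has
players `ι`, strategy sets `S i` (the full types, all nonempty) and payoff
functions `p i`. A restriction of `H` is a family `G : ∀ i, Set (S i)`,
ordered componentwise; this is a complete lattice with largest element `⊤ = H`.
-/

open Set

universe u

/-- The `o`-th transfinite iterate of `T`, starting from `⊤ = H`. -/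
noncomputable def lfpIter {D : Type u} [CompleteLattice D] (T : D → D) (o : Ordinal.{u}) : D :=
  Ordinal.limitRecOn (motive := fun _ => D) o ⊤ (fun _ ih => T ih)
    (fun o _ ih => ⨅ o' : {o' : Ordinal.{u} // o' < o}, ih o'.1 o'.2)

/-- The outcome `T^∞` of (iterating) `T`. -/
noncomputable def outcome {D : Type u} [CompleteLattice D] (T : D → D) : D :=
  lfpIter T (sInf {α : Ordinal.{u} | lfpIter T (α + 1) = lfpIter T α})

/-- The operator `T_φ` of iterated elimination of strategies that are not `φ_i`-optimal:
`T_φ(G)_i = {s_i ∈ G_i | φ_i(s_i, G)}`. -/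
def Topr {ι : Type u} {S : ι → Type u} (φ : ∀ i, S i → (∀ j, Set (S j)) → Prop)
    (G : ∀ i, Set (S i)) : ∀ i, Set (S i) :=
  fun i => {s | s ∈ G i ∧ φ i s G}

/-- `□E`: the event that every player believes the event `E`. -/
def box {ι Ω : Type u} (P : ι → Ω → Set Ω) (E : Set Ω) : Set Ω :=
  {ω | ∀ i, P i ω ⊆ E}

/-- `B*E`: the common belief event, `⋂_{k ≥ 1} □^k E`. -/
def commonBelief {ι Ω : Type u} (P : ι → Ω → Set Ω) (E : Set Ω) : Set Ω :=
  ⋂ k : ℕ, (box P)^[k + 1] E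

/-- `G_E`: the restriction of the game to the event `E`, given by the images of `E`
under the strategy functions `s̄_i`. -/
def restrOf {ι Ω : Type u} {S : ι → Type u} (sb : ∀ i, Ω → S i) (E : Set Ω) :
    ∀ i, Set (S i) := fun i => sb i '' E

/-- `RAT(φ)`: the event that each player `i` is `φ_i`-rational, i.e. that
`φ_i(s̄_i(ω), G_{P_i(ω)})` holds for every player `i`. -/
def RAT {ι Ω : Type u} {S : ι → Type u} (φ : ∀ i, S i → (∀ j, Set (S j)) → Prop)
    (sb : ∀ i, Ω → S i) (P : ι → Ω → Set Ω) : Set Ω :=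
  {ω | ∀ i, φ i (sb i ω) (restrOf sb (P i ω))}


/-- `s'` strictly dominates `s` on the restriction `G` (for player `i`):
`p_i(s', s_{-i}) > p_i(s, s_{-i})` for all `s_{-i} ∈ G_{-i}`. -/
def StrDom {ι : Type u} [DecidableEq ι] {S : ι → Type u}
    (p : ∀ i : ι, (∀ j, S j) → ℝ) (G : ∀ j, Set (S j)) (i : ι) (s' s : S i) : Prop :=
  ∀ t : ∀ j, S j, (∀ j, j ≠ i → t j ∈ G j) →
    p i (Function.update t i s) < p i (Function.update t i s')

/-- `sd^g_i(s, G)`: `s` is not strictly dominated on `G` by any strategy in `H_i`. -/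
def sdg {ι : Type u} [DecidableEq ι] {S : ι → Type u}
    (p : ∀ i : ι, (∀ j, S j) → ℝ) (i : ι) (s : S i) (G : ∀ j, Set (S j)) : Prop :=
  ¬ ∃ s' : S i, StrDom p G i s' s

/-- `sd^l_i(s, G)`: `s` is not strictly dominated on `G` by any strategy in `G_i`. -/
def sdl {ι : Type u} [DecidableEq ι] {S : ι → Type u}
    (p : ∀ i : ι, (∀ j, S j) → ℝ) (i : ι) (s : S i) (G : ∀ j, Set (S j)) : Prop :=
  ¬ ∃ s' ∈ G i, StrDom p G i s' s

/-- `br^g_i(s, G)`: `s` is a best response in `H_i` to some joint (pure) strategy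
of the opponents held in `G`. -/
def brg {ι : Type u} [DecidableEq ι] {S : ι → Type u}
    (p : ∀ i : ι, (∀ j, S j) → ℝ) (i : ι) (s : S i) (G : ∀ j, Set (S j)) : Prop :=
  ∃ t : ∀ j, S j, (∀ j, j ≠ i → t j ∈ G j) ∧
    ∀ s' : S i, p i (Function.update t i s') ≤ p i (Function.update t i s)

/-!
The common-knowledge event is self-evident (`K*E ⊆ □K*E`), so every strategy in
`G = G_{K*RAT(br^g)}` is a best response to opponents' play inside `G`. Such a strategy
stays a best response to play inside any larger restriction, and a best response is never
strictly dominated, so no round of the elimination removes a strategy of `G`; transfinite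
induction does the rest.
-/

section Iteration

variable {D : Type u} [CompleteLattice D] {T : D → D}

theorem lfpIter_zero : lfpIter T 0 = ⊤ :=
  Ordinal.limitRecOn_zero _ _ _

theorem lfpIter_add_one (o : Ordinal.{u}) : lfpIter T (o + 1) = T (lfpIter T o) :=
  Ordinal.limitRecOn_add_one _ _ _ _

theorem lfpIter_of_isSuccLimit {o : Ordinal.{u}} (ho : Order.IsSuccLimit o) :
    lfpIter T o = ⨅ o' : {o' : Ordinal.{u} // o' < o}, lfpIter T o'.1 :=
  Ordinal.limitRecOn_limit _ _ _ _ ho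

theorem le_lfpIter {G : D} (hT : ∀ X, G ≤ X → G ≤ T X) (o : Ordinal.{u}) :
    G ≤ lfpIter T o := by
  induction o using Ordinal.limitRecOn with
  | zero => exact lfpIter_zero (T := T) ▸ le_top
  | add_one o ih => exact lfpIter_add_one (T := T) o ▸ hT _ ih
  | limit o ho ih =>
    exact (lfpIter_of_isSuccLimit (T := T) ho).symm ▸ le_iInf fun o' => ih o'.1 o'.2

theorem le_outcome {G : D} (hT : ∀ X, G ≤ X → G ≤ T X) : G ≤ outcome T :=
  le_lfpIter hT _

end Iteration

section Knowledge

variable {ι Ω : Type u} {P : ι → Ω → Set Ω} {E : Set Ω}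

theorem mem_of_mem_box (hP : ∀ i ω, ω ∈ P i ω) (i : ι) {ω : Ω} (h : ω ∈ box P E) : ω ∈ E :=
  h i (hP i ω)

theorem commonBelief_subset_box : commonBelief P E ⊆ box P E :=
  fun _ hω => mem_iInter.mp hω 0

theorem commonBelief_subset_box_commonBelief : commonBelief P E ⊆ box P (commonBelief P E) :=
  fun _ hω i _ hω' => mem_iInter.mpr fun k => by
    have := mem_iInter.mp hω (k + 1)
    rw [Function.iterate_succ_apply'] at this
    exact this i hω'

end Knowledge

section Rationality

variable {ι : Type u} {S : ι → Type u}

theorem restrOf_le_Topr {Ω : Type u} {φ : ∀ i, S i → (∀ j, Set (S j)) → Prop}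
    (hφ : ∀ i s, Monotone (φ i s)) {sb : ∀ i, Ω → S i} {P : ι → Ω → Set Ω} {E : Set Ω}
    (hE : E ⊆ box P E) (hRAT : E ⊆ RAT φ sb P) : restrOf sb E ≤ Topr φ (restrOf sb E) := by
  rintro i _ ⟨ω, hω, rfl⟩
  exact ⟨mem_image_of_mem _ hω, hφ i _ (fun _ => image_mono (hE hω i)) (hRAT hω i)⟩

variable [DecidableEq ι] {p : ι → (∀ j, S j) → ℝ} {i : ι} {s : S i}

theorem brg_mono : Monotone (brg p i s) := by
  rintro G G' hG ⟨t, ht, hbest⟩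
  exact ⟨t, fun j hj => hG j (ht j hj), hbest⟩

theorem sdl_of_brg {G : ∀ j, Set (S j)} (h : brg p i s G) : sdl p i s G := by
  obtain ⟨t, ht, hbest⟩ := h
  rintro ⟨s', -, hdom⟩
  exact (hdom t ht).not_ge (hbest s')

theorem le_Topr_sdl_of_le {G X : ∀ j, Set (S j)} (hG : G ≤ Topr (brg p) G) (hX : G ≤ X) :
    G ≤ Topr (sdl p) X := fun i _ hs =>
  ⟨hX i hs, sdl_of_brg (brg_mono hX (hG i hs).2)⟩

end Rationality

theorem restr_commonKnowledge_RAT_brg_le_outcome_sdl_general {ι : Type u} [DecidableEq ι]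
    {S : ι → Type u} (p : ∀ i : ι, (∀ j, S j) → ℝ)
    {Ω : Type u} (sb : ∀ i, Ω → S i) (P : ι → Ω → Set Ω)
    (hP3 : ∀ i ω, ω ∈ P i ω) :
    restrOf sb (commonBelief P (RAT (brg p) sb P)) ≤ outcome (Topr (sdl p)) := by
  have hRAT : commonBelief P (RAT (brg p) sb P) ⊆ RAT (brg p) sb P :=
    fun _ hω i => mem_of_mem_box hP3 i (commonBelief_subset_box hω) i
  have hclosed :=
    restrOf_le_Topr (fun _ _ => brg_mono (p := p)) commonBelief_subset_box_commonBelief hRAT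
  exact le_outcome fun _ => le_Topr_sdl_of_le hclosed

/-- for every knowledge model for the initial game `H`,
`G_{K*RAT(br^g)} ⊆ T_{sd^l}^∞`: common knowledge that each player plays a best
response (within `H_i`, to some joint pure strategy of the opponents he considers
possible) implies that the players choose only strategies surviving the (possibly
transfinite) iterated elimination of strictly dominated strategies. -/
theorem restr_commonKnowledge_RAT_brg_le_outcome_sdl {ι : Type u} [DecidableEq ι]
    {S : ι → Type u} [∀ i, Nonempty (S i)] (p : ∀ i : ι, (∀ j, S j) → ℝ)
    {Ω : Type u} [Nonempty Ω] (sb : ∀ i, Ω → S i) (P : ι → Ω → Set Ω)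
    (hP1 : ∀ i ω, (P i ω).Nonempty)
    (hP2 : ∀ i ω ω', ω' ∈ P i ω → P i ω' = P i ω)
    (hP3 : ∀ i ω, ω ∈ P i ω) :
    restrOf sb (commonBelief P (RAT (brg p) sb P)) ≤ outcome (Topr (sdl p)) :=
  restr_commonKnowledge_RAT_brg_le_outcome_sdl_general p sb P hP3
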